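/- Under the hypotheses on the Bloch-decomposition step B_{Δt}, let U : {0,…,L−1}×{0,…,R−1} → ℝ be a real-valued external potential evaluated on the grid, and consider the full one-step Bloch decomposition-based time-splitting map: given ψ : {0,…,L−1}×{0,…,R−1} → ℂ, first set ψ' = B_{Δt}(ψ) and then ψ''(ℓ,r) = ψ'(ℓ,r)·exp(−i·U(ℓ,r)·Δt/ε). Then ∑_{ℓ=0}^{L−1}∑_{r=0}^{R−1} |ψ''(ℓ,r)|² = ∑_{ℓ=0}^{L−1}∑_{r=0}^{R−1} |ψ(ℓ,r)|²; i.e., the deterministic Bloch decomposition-based time-splitting scheme conserves the total mass on the fully discrete level. -/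

import Mathlib

open Complex Finset Real

/-- One Bloch-decomposition step `B_{Δt}` of the Bloch decomposition-based
time-splitting scheme, on the fully discrete level: `L` quasi-momentum points
`k_ℓ = -1/2 + ℓ/L`, `R` grid points per cell, discrete Bloch eigenfunctions
`φ ℓ m r ≈ φ_m(y_r, k_ℓ)` and band energies `E ℓ m ≈ E_m(k_ℓ)`. -/
noncomputable def blochStep (L R : ℕ) (ε Δt : ℝ)
    (φ : Fin L → Fin R → Fin R → ℂ) (E : Fin L → Fin R → ℝ)
    (ψ : Fin L → Fin R → ℂ) : Fin L → Fin R → ℂ :=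
  let k : Fin L → ℝ := fun ℓ => -(1/2 : ℝ) + (ℓ : ℝ) / L
  -- step 1.1: ψ̃(ℓ,r) = ∑_j ψ(j,r) exp(−2πi k_ℓ j)
  let ψt : Fin L → Fin R → ℂ := fun ℓ r =>
    ∑ j : Fin L, ψ j r * Complex.exp (-(2 * π * Complex.I * (k ℓ) * (j : ℝ)))
  -- step 1.2: C(m,ℓ) = (2π/R) ∑_r ψ̃(ℓ,r) conj(φ_ℓ(m,r))
  let C : Fin R → Fin L → ℂ := fun m ℓ =>
    (2 * (π : ℂ) / R) * ∑ r : Fin R, ψt ℓ r * (starRingEnd ℂ) (φ ℓ m r)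
  -- step 1.3: C'(m,ℓ) = C(m,ℓ) exp(−i E_ℓ(m) Δt / ε)
  let C' : Fin R → Fin L → ℂ := fun m ℓ =>
    C m ℓ * Complex.exp (-(Complex.I * (E ℓ m) * Δt / ε))
  -- step 1.4: ψ̃'(ℓ,r) = ∑_m C'(m,ℓ) φ_ℓ(m,r)
  let ψt' : Fin L → Fin R → ℂ := fun ℓ r => ∑ m : Fin R, C' m ℓ * φ ℓ m r
  -- step 1.5: ψ'(ℓ,r) = (1/L) ∑_j ψ̃'(j,r) exp(2πi k_j ℓ)
  fun ℓ r =>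
    (1 / (L : ℂ)) * ∑ j : Fin L, ψt' j r * Complex.exp (2 * π * Complex.I * (k j) * (ℓ : ℝ))

open ComplexConjugate

/-! Each sub-step of `blochStep` multiplies the discrete mass `∑ |ψ|²` by a constant: the forward
and the inverse discrete Fourier transform in the quasi-momentum index by `L` and `1 / L`, the
projection onto the Bloch basis and the synthesis from it by `2π / R` and `R / (2π)` (the two
orthogonality relations of `φ`), and the band-energy phase by `1`. These constants multiply to one,
and the potential phase has modulus one. -/

section Grid

variable {ι ι' κ κ' : Type*} [Fintype ι] [Fintype ι'] [Fintype κ] [Fintype κ']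

lemma sum_norm_sq_sum_mul [DecidableEq κ] (M : ι → κ → ℂ) (c : ℝ)
    (hM : ∀ a b, ∑ i, M i a * conj (M i b) = if a = b then (c : ℂ) else 0) (f : κ → ℂ) :
    ∑ i, ‖∑ k, f k * M i k‖ ^ 2 = c * ∑ k, ‖f k‖ ^ 2 := by
  apply Complex.ofReal_injective
  push_cast
  simp_rw [← Complex.mul_conj', map_sum, map_mul, sum_mul_sum, mul_sum]
  calc ∑ i, ∑ k, ∑ k', f k * M i k * (conj (f k') * conj (M i k'))
      = ∑ k, ∑ k', f k * conj (f k') * ∑ i, M i k * conj (M i k') := by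
        rw [sum_comm]
        refine sum_congr rfl fun k _ => ?_
        rw [sum_comm]
        simp_rw [mul_sum]
        exact sum_congr rfl fun k' _ => sum_congr rfl fun i _ => by ring
    _ = ∑ k, c * (f k * conj (f k)) := by
        simp_rw [hM, mul_ite, mul_zero, sum_ite_eq, mem_univ, if_true, mul_comm]

noncomputable def gridMass (ψ : ι → κ → ℂ) : ℝ := ∑ i, ∑ j, ‖ψ i j‖ ^ 2

def applyFst (M : ι' → ι → ℂ) (ψ : ι → κ → ℂ) : ι' → κ → ℂ :=
  fun i' j => ∑ i, ψ i j * M i' i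

def applySnd (N : ι → κ' → κ → ℂ) (ψ : ι → κ → ℂ) : ι → κ' → ℂ :=
  fun i j' => ∑ j, ψ i j * N i j' j

lemma gridMass_const_mul (a : ℂ) (ψ : ι → κ → ℂ) :
    gridMass (fun i j => a * ψ i j) = ‖a‖ ^ 2 * gridMass ψ := by
  simp only [gridMass, norm_mul, mul_pow, mul_sum]

lemma gridMass_mul_of_norm_eq_one (ψ u : ι → κ → ℂ) (hu : ∀ i j, ‖u i j‖ = 1) :
    gridMass (fun i j => ψ i j * u i j) = gridMass ψ := by
  simp only [gridMass, norm_mul, hu, mul_one]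

lemma gridMass_applyFst [DecidableEq ι] (M : ι' → ι → ℂ) (c : ℝ)
    (hM : ∀ a b, ∑ i', M i' a * conj (M i' b) = if a = b then (c : ℂ) else 0)
    (ψ : ι → κ → ℂ) : gridMass (applyFst M ψ) = c * gridMass ψ := by
  simp only [gridMass, applyFst]
  conv_rhs => rw [sum_comm, mul_sum]
  rw [sum_comm]
  exact sum_congr rfl fun j _ => sum_norm_sq_sum_mul M c hM (ψ · j)

lemma gridMass_applySnd [DecidableEq κ] (N : ι → κ' → κ → ℂ) (c : ℝ)
    (hN : ∀ i a b, ∑ j', N i j' a * conj (N i j' b) = if a = b then (c : ℂ) else 0)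
    (ψ : ι → κ → ℂ) : gridMass (applySnd N ψ) = c * gridMass ψ := by
  simp only [gridMass, applySnd]
  rw [mul_sum]
  exact sum_congr rfl fun i _ => sum_norm_sq_sum_mul (N i) c (hN i) (ψ i)

end Grid

lemma sum_exp_two_pi_I_mul_sub_div {L : ℕ} (a b : Fin L) :
    ∑ ℓ : Fin L, exp (2 * π * I * ℓ * ((a : ℂ) - b) / L) = if a = b then (L : ℂ) else 0 := by
  split_ifs with hab
  · simp [hab]
  have hL : L ≠ 0 := (Fin.pos a).ne'
  have hprim := Complex.isPrimitiveRoot_exp L hL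
  set ζ := exp (2 * π * I / L) ^ ((a : ℤ) - b) with hζ
  have hterm : ∀ ℓ : ℕ, exp (2 * π * I * ℓ * ((a : ℂ) - b) / L) = ζ ^ ℓ := by
    intro ℓ
    rw [hζ, ← zpow_natCast, ← zpow_mul, ← Complex.exp_int_mul]
    congr 1
    push_cast
    ring
  have hζ_ne_one : ζ ≠ 1 := by
    rw [hζ, Ne, hprim.zpow_eq_one_iff_dvd]
    intro hdvd
    have := Int.eq_zero_of_abs_lt_dvd hdvd (by rw [abs_lt]; omega)
    exact hab (Fin.ext (by omega))
  have hζ_pow : ζ ^ L = 1 := by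
    rw [hζ, ← zpow_natCast, ← zpow_mul, hprim.zpow_eq_one_iff_dvd]
    exact dvd_mul_left _ _
  simp_rw [hterm]
  rw [Fin.sum_univ_eq_sum_range (ζ ^ ·), geom_sum_eq hζ_ne_one, hζ_pow, sub_self, zero_div]

noncomputable def quasiMomentum (L : ℕ) (ℓ : Fin L) : ℝ := -(1 / 2 : ℝ) + (ℓ : ℝ) / L

lemma sum_exp_quasiMomentum_mul_conj {L : ℕ} (a b : Fin L) :
    ∑ ℓ : Fin L, exp (-(2 * π * I * (quasiMomentum L ℓ : ℝ) * (a : ℝ))) *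
      conj (exp (-(2 * π * I * (quasiMomentum L ℓ : ℝ) * (b : ℝ)))) =
    if a = b then (L : ℂ) else 0 := by
  have hL : (L : ℂ) ≠ 0 := Nat.cast_ne_zero.mpr (Fin.pos a).ne'
  -- the shift `-1/2` in the quasi-momentum only contributes an `ℓ`-independent phase
  have hterm : ∀ ℓ : Fin L, exp (-(2 * π * I * (quasiMomentum L ℓ : ℝ) * (a : ℝ))) *
      conj (exp (-(2 * π * I * (quasiMomentum L ℓ : ℝ) * (b : ℝ)))) =
      exp (π * I * ((a : ℂ) - b)) * exp (2 * π * I * ℓ * ((b : ℂ) - a) / L) := by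
    intro ℓ
    rw [← Complex.exp_conj, ← Complex.exp_add, ← Complex.exp_add]
    congr 1
    simp only [quasiMomentum, map_neg, map_mul, conj_I, conj_ofReal, map_ofNat]
    push_cast
    field_simp
    ring
  rw [sum_congr rfl fun ℓ _ => hterm ℓ, ← mul_sum, sum_exp_two_pi_I_mul_sub_div]
  rcases eq_or_ne a b with rfl | hab
  · simp
  · rw [if_neg hab.symm, if_neg hab, mul_zero]

lemma sum_exp_mul_quasiMomentum_mul_conj {L : ℕ} (a b : Fin L) :
    ∑ ℓ : Fin L, exp (2 * π * I * (quasiMomentum L a : ℝ) * (ℓ : ℝ)) *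
      conj (exp (2 * π * I * (quasiMomentum L b : ℝ) * (ℓ : ℝ))) =
    if a = b then (L : ℂ) else 0 := by
  have hL : (L : ℂ) ≠ 0 := Nat.cast_ne_zero.mpr (Fin.pos a).ne'
  rw [← sum_exp_two_pi_I_mul_sub_div]
  refine sum_congr rfl fun ℓ _ => ?_
  rw [← Complex.exp_conj, ← Complex.exp_add]
  congr 1
  simp only [quasiMomentum, map_mul, conj_I, conj_ofReal, map_ofNat]
  push_cast
  field_simp
  ring

lemma norm_exp_neg_I_mul_div (t Δt ε : ℝ) : ‖exp (-(I * t * Δt / ε))‖ = 1 := by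
  rw [show -(I * t * Δt / ε) = ((-(t * Δt / ε) : ℝ) : ℂ) * I by push_cast; ring]
  exact norm_exp_ofReal_mul_I _

lemma blochStep_eq_applyFst_applySnd (L R : ℕ) (ε Δt : ℝ)
    (φ : Fin L → Fin R → Fin R → ℂ) (E : Fin L → Fin R → ℝ) (ψ : Fin L → Fin R → ℂ) :
    blochStep L R ε Δt φ E ψ = fun ℓ r => (1 / (L : ℂ)) *
      applyFst (fun ℓ j : Fin L => exp (2 * π * I * (quasiMomentum L j : ℝ) * (ℓ : ℝ)))
        (applySnd (fun ℓ r m => φ ℓ m r) fun ℓ m =>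
          (2 * (π : ℂ) / R) *
            applySnd (fun ℓ m r => conj (φ ℓ m r))
              (applyFst
                (fun ℓ j : Fin L => exp (-(2 * π * I * (quasiMomentum L ℓ : ℝ) * (j : ℝ)))) ψ)
              ℓ m *
            exp (-(I * (E ℓ m) * Δt / ε))) ℓ r :=
  rfl

lemma gridMass_blochStep {L R : ℕ} (hL : 1 ≤ L) (hR : 1 ≤ R) (ε Δt : ℝ)
    (φ : Fin L → Fin R → Fin R → ℂ) (E : Fin L → Fin R → ℝ)
    (horth₁ : ∀ j m n, ∑ r, φ j m r * conj (φ j n r) = if m = n then (R : ℂ) / (2 * π) else 0)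
    (horth₂ : ∀ j r s, ∑ m, φ j m r * conj (φ j m s) = if r = s then (R : ℂ) / (2 * π) else 0)
    (ψ : Fin L → Fin R → ℂ) :
    gridMass (blochStep L R ε Δt φ E ψ) = gridMass ψ := by
  have hc : ((R / (2 * π) : ℝ) : ℂ) = R / (2 * π) := by push_cast; rfl
  have hsynthesis : ∀ j m n,
      ∑ r, φ j m r * conj (φ j n r) = if m = n then ((R / (2 * π) : ℝ) : ℂ) else 0 := by
    simpa only [hc] using horth₁
  have hprojection : ∀ j r s,
      ∑ m, conj (φ j m r) * conj (conj (φ j m s)) =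
        if r = s then ((R / (2 * π) : ℝ) : ℂ) else 0 := by
    intro j r s
    simp_rw [conj_conj, mul_comm (conj _)]
    rw [horth₂ j s r, hc]
    simp only [eq_comm]
  rw [blochStep_eq_applyFst_applySnd, gridMass_const_mul,
    gridMass_applyFst _ L (by push_cast; exact sum_exp_mul_quasiMomentum_mul_conj),
    gridMass_applySnd _ _ hsynthesis,
    gridMass_mul_of_norm_eq_one _ _ fun ℓ m => norm_exp_neg_I_mul_div _ _ _, gridMass_const_mul,
    gridMass_applySnd _ _ hprojection,
    gridMass_applyFst _ L (by push_cast; exact sum_exp_quasiMomentum_mul_conj)]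
  have hL' : (L : ℝ) ≠ 0 := by norm_cast; omega
  have hR' : (R : ℝ) ≠ 0 := by norm_cast; omega
  simp only [norm_div, norm_one, Complex.norm_natCast, norm_mul, Complex.norm_ofNat, norm_real,
    Real.norm_of_nonneg pi_pos.le]
  field_simp

theorem bloch_time_splitting_conserves_mass_general
    (L R : ℕ) (hL : 1 ≤ L) (hR : 1 ≤ R) (ε Δt : ℝ)
    (φ : Fin L → Fin R → Fin R → ℂ) (E : Fin L → Fin R → ℝ)
    (horth₁ : ∀ j : Fin L, ∀ m n : Fin R,
      ∑ r : Fin R, φ j m r * (starRingEnd ℂ) (φ j n r) =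
        if m = n then ((R : ℂ) / (2 * π)) else 0)
    (horth₂ : ∀ j : Fin L, ∀ r s : Fin R,
      ∑ m : Fin R, φ j m r * (starRingEnd ℂ) (φ j m s) =
        if r = s then ((R : ℂ) / (2 * π)) else 0)
    (U : Fin L → Fin R → ℝ)
    (ψ : Fin L → Fin R → ℂ) :
    ∑ ℓ : Fin L, ∑ r : Fin R,
        ‖blochStep L R ε Δt φ E ψ ℓ r *
          Complex.exp (-(Complex.I * (U ℓ r) * Δt / ε))‖ ^ 2 =
      ∑ ℓ : Fin L, ∑ r : Fin R, ‖ψ ℓ r‖ ^ 2 := by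
  have hphase := gridMass_mul_of_norm_eq_one (blochStep L R ε Δt φ E ψ)
    (fun ℓ r => exp (-(I * (U ℓ r) * Δt / ε))) fun ℓ r => norm_exp_neg_I_mul_div _ _ _
  rwa [gridMass_blochStep hL hR ε Δt φ E horth₁ horth₂] at hphase

theorem bloch_time_splitting_conserves_mass
    (L R : ℕ) (hL : 1 ≤ L) (hR : 1 ≤ R) (ε Δt : ℝ) (hε : 0 < ε)
    (φ : Fin L → Fin R → Fin R → ℂ) (E : Fin L → Fin R → ℝ)
    (horth₁ : ∀ j : Fin L, ∀ m n : Fin R,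
      ∑ r : Fin R, φ j m r * (starRingEnd ℂ) (φ j n r) =
        if m = n then ((R : ℂ) / (2 * π)) else 0)
    (horth₂ : ∀ j : Fin L, ∀ r s : Fin R,
      ∑ m : Fin R, φ j m r * (starRingEnd ℂ) (φ j m s) =
        if r = s then ((R : ℂ) / (2 * π)) else 0)
    (U : Fin L → Fin R → ℝ)
    (ψ : Fin L → Fin R → ℂ) :
    ∑ ℓ : Fin L, ∑ r : Fin R,
        ‖blochStep L R ε Δt φ E ψ ℓ r *
          Complex.exp (-(Complex.I * (U ℓ r) * Δt / ε))‖ ^ 2 =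
      ∑ ℓ : Fin L, ∑ r : Fin R, ‖ψ ℓ r‖ ^ 2 :=
  bloch_time_splitting_conserves_mass_general L R hL hR ε Δt φ E horth₁ horth₂ U ψ
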